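/- Positive identity expansion: for every positive proposition A⁺, if Γ, ⟨A⁺⟩ ; Ω ⊢ U is derivable in the focused sequent calculus for polarized intuitionistic logic, then Γ ; A⁺, Ω ⊢ U is derivable. The proof is by structural induction on A⁺ (mutually with negative identity expansion), using only the focal substitution principles and weakening. -/

import Mathlib

namespace StructuralFocalization

/- Polarized propositional intuitionistic logic -/
mutual
inductive PProp : Type
  | atom : Nat → PProp
  | down : NProp → PProp
  | bot  : PProp
  | or   : PProp → PProp → PProp
  | top  : PProp
  | and  : PProp → PProp → PProp
inductive NProp : Type
  | atom : Nat → NProp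
  | up   : PProp → NProp
  | imp  : PProp → NProp → NProp
  | top  : NProp
  | and  : NProp → NProp → NProp
end

/- Hypotheses: negative propositions or suspended positives ⟨A⁺⟩ -/
inductive Hyp : Type
  | neg  : NProp → Hyp
  | susp : PProp → Hyp

/- Succedents: A⁺, A⁻, or suspended ⟨A⁻⟩ -/
inductive Succ : Type
  | pos  : PProp → Succ
  | neg  : NProp → Succ
  | susp : NProp → Succ

abbrev Ctx := List Hyp

def Succ.stable : Succ → Prop
  | .pos _ => True
  | .susp _ => True
  | .neg _ => False

def Hyp.suspNormal : Hyp → Prop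
  | .susp (PProp.atom _) => True
  | .susp _ => False
  | .neg _ => True

def Ctx.suspNormal (Γ : Ctx) : Prop := ∀ h ∈ Γ, h.suspNormal

def Succ.suspNormal : Succ → Prop
  | .susp (NProp.atom _) => True
  | .susp _ => False
  | _ => True

/- The focused sequent calculus (Figures 3 and 4 of "Structural focalization",
   with the generalized id⁺/id⁻ rules for arbitrary suspended propositions). -/
mutual
/-- Right focus: Γ ⊢ [A⁺] -/
inductive RFoc : Ctx → PProp → Prop
  | idP {Γ A} : Hyp.susp A ∈ Γ → RFoc Γ A
  | downR {Γ A} : Inv Γ [] (Succ.neg A) → RFoc Γ (PProp.down A)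
  | orR1 {Γ A B} : RFoc Γ A → RFoc Γ (PProp.or A B)
  | orR2 {Γ A B} : RFoc Γ B → RFoc Γ (PProp.or A B)
  | topR {Γ} : RFoc Γ PProp.top
  | andR {Γ A B} : RFoc Γ A → RFoc Γ B → RFoc Γ (PProp.and A B)
/-- Inversion: Γ ; Ω ⊢ U -/
inductive Inv : Ctx → List PProp → Succ → Prop
  | focR {Γ A} : RFoc Γ A → Inv Γ [] (Succ.pos A)
  | focL {Γ A U} : Hyp.neg A ∈ Γ → Succ.stable U → LFoc Γ A U → Inv Γ [] U
  | etaP {Γ p Ω U} : Inv (Hyp.susp (PProp.atom p) :: Γ) Ω U → Inv Γ (PProp.atom p :: Ω) U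
  | downL {Γ A Ω U} : Inv (Hyp.neg A :: Γ) Ω U → Inv Γ (PProp.down A :: Ω) U
  | botL {Γ Ω U} : Inv Γ (PProp.bot :: Ω) U
  | orL {Γ A B Ω U} : Inv Γ (A :: Ω) U → Inv Γ (B :: Ω) U → Inv Γ (PProp.or A B :: Ω) U
  | topPL {Γ Ω U} : Inv Γ Ω U → Inv Γ (PProp.top :: Ω) U
  | andPL {Γ A B Ω U} : Inv Γ (A :: B :: Ω) U → Inv Γ (PProp.and A B :: Ω) U
  | etaN {Γ p} : Inv Γ [] (Succ.susp (NProp.atom p)) → Inv Γ [] (Succ.neg (NProp.atom p))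
  | upR {Γ A} : Inv Γ [] (Succ.pos A) → Inv Γ [] (Succ.neg (NProp.up A))
  | impR {Γ A B} : Inv Γ [A] (Succ.neg B) → Inv Γ [] (Succ.neg (NProp.imp A B))
  | topNR {Γ} : Inv Γ [] (Succ.neg NProp.top)
  | andNR {Γ A B} : Inv Γ [] (Succ.neg A) → Inv Γ [] (Succ.neg B) →
      Inv Γ [] (Succ.neg (NProp.and A B))
/-- Left focus: Γ ; [A⁻] ⊢ U -/
inductive LFoc : Ctx → NProp → Succ → Prop
  | idN {Γ A} : LFoc Γ A (Succ.susp A)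
  | upL {Γ A U} : Inv Γ [A] U → LFoc Γ (NProp.up A) U
  | impL {Γ A B U} : RFoc Γ A → LFoc Γ B U → LFoc Γ (NProp.imp A B) U
  | andL1 {Γ A B U} : LFoc Γ A U → LFoc Γ (NProp.and A B) U
  | andL2 {Γ A B U} : LFoc Γ B U → LFoc Γ (NProp.and A B) U
end

/- Unpolarized propositions and Kleene's G3 -/
inductive UProp : Type
  | atom : Nat → UProp
  | bot  : UProp
  | or   : UProp → UProp → UProp
  | top  : UProp
  | and  : UProp → UProp → UProp
  | imp  : UProp → UProp → UProp

inductive G3 : List UProp → UProp → Prop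
  | init {Γ p} : UProp.atom p ∈ Γ → G3 Γ (UProp.atom p)
  | botL {Γ Q} : UProp.bot ∈ Γ → G3 Γ Q
  | orR1 {Γ A B} : G3 Γ A → G3 Γ (UProp.or A B)
  | orR2 {Γ A B} : G3 Γ B → G3 Γ (UProp.or A B)
  | orL {Γ A B Q} : UProp.or A B ∈ Γ → G3 (A :: Γ) Q → G3 (B :: Γ) Q → G3 Γ Q
  | topR {Γ} : G3 Γ UProp.top
  | andR {Γ A B} : G3 Γ A → G3 Γ B → G3 Γ (UProp.and A B)
  | andL1 {Γ A B Q} : UProp.and A B ∈ Γ → G3 (A :: Γ) Q → G3 Γ Q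
  | andL2 {Γ A B Q} : UProp.and A B ∈ Γ → G3 (B :: Γ) Q → G3 Γ Q
  | impR {Γ A B} : G3 (A :: Γ) B → G3 Γ (UProp.imp A B)
  | impL {Γ A B Q} : UProp.imp A B ∈ Γ → G3 Γ A → G3 (B :: Γ) Q → G3 Γ Q

/-- G3 with an ordered auxiliary context Ψ: Γ; Ψ ⊢ Q -/
inductive G3Psi : List UProp → List UProp → UProp → Prop
  | cons {Γ P Ψ Q} : G3Psi (P :: Γ) Ψ Q → G3Psi Γ (P :: Ψ) Q
  | nil {Γ Q} : G3 Γ Q → G3Psi Γ [] Q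

/- Erasure -/
mutual
def eraseP : PProp → UProp
  | .atom p => .atom p
  | .down A => eraseN A
  | .bot => .bot
  | .or A B => .or (eraseP A) (eraseP B)
  | .top => .top
  | .and A B => .and (eraseP A) (eraseP B)
def eraseN : NProp → UProp
  | .atom p => .atom p
  | .up A => eraseP A
  | .imp A B => .imp (eraseP A) (eraseN B)
  | .top => .top
  | .and A B => .and (eraseN A) (eraseN B)
end

def eraseHyp : Hyp → UProp
  | .neg A => eraseN A
  | .susp A => eraseP A

def eraseCtx (Γ : Ctx) : List UProp := Γ.map eraseHyp

def eraseSucc : Succ → UProp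
  | .pos A => eraseP A
  | .neg A => eraseN A
  | .susp A => eraseN A

/-!
Both identity expansions are proved together by induction on the proposition. To expand a
suspended hypothesis `⟨A⁺⟩`, invert `A⁺` once on the left and discharge `⟨A⁺⟩` by focal
substitution of a right-focus proof of `A⁺` assembled from the hypotheses that the inversion
produced; at `↓B⁻` that proof needs negative identity expansion at `B⁻`. Dually, a suspended
conclusion `⟨A⁻⟩` is discharged by focal substitution of a left-focus proof of `A⁻`, which at
`↑B⁺` needs positive identity expansion at `B⁺`. Focal substitution is a structural induction
on the derivation once it is stated up to `⊆` of contexts, so that it passes under the rules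
that extend the context.
-/

theorem cons_subset_cons_cons {α : Type*} {a b : α} {l l' : List α} (h : l ⊆ a :: l') :
    b :: l ⊆ a :: b :: l' :=
  List.cons_subset.2
    ⟨by simp, List.Subset.trans h (List.cons_subset_cons _ (List.subset_cons_self _ _))⟩

mutual
theorem RFoc.weaken {Γ Γ' : Ctx} {A : PProp} : RFoc Γ A → Γ ⊆ Γ' → RFoc Γ' A
  | .idP m, s => .idP (s m)
  | .downR d, s => .downR (d.weaken s)
  | .orR1 d, s => .orR1 (d.weaken s)
  | .orR2 d, s => .orR2 (d.weaken s)
  | .topR, _ => .topR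
  | .andR d e, s => .andR (d.weaken s) (e.weaken s)

theorem Inv.weaken {Γ Γ' : Ctx} {Ω : List PProp} {U : Succ} :
    Inv Γ Ω U → Γ ⊆ Γ' → Inv Γ' Ω U
  | .focR d, s => .focR (d.weaken s)
  | .focL m st d, s => .focL (s m) st (d.weaken s)
  | .etaP d, s => .etaP (d.weaken (List.cons_subset_cons _ s))
  | .downL d, s => .downL (d.weaken (List.cons_subset_cons _ s))
  | .botL, _ => .botL
  | .orL d e, s => .orL (d.weaken s) (e.weaken s)
  | .topPL d, s => .topPL (d.weaken s)
  | .andPL d, s => .andPL (d.weaken s)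
  | .etaN d, s => .etaN (d.weaken s)
  | .upR d, s => .upR (d.weaken s)
  | .impR d, s => .impR (d.weaken s)
  | .topNR, _ => .topNR
  | .andNR d e, s => .andNR (d.weaken s) (e.weaken s)

theorem LFoc.weaken {Γ Γ' : Ctx} {A : NProp} {U : Succ} :
    LFoc Γ A U → Γ ⊆ Γ' → LFoc Γ' A U
  | .idN, _ => .idN
  | .upL d, s => .upL (d.weaken s)
  | .impL d e, s => .impL (d.weaken s) (e.weaken s)
  | .andL1 d, s => .andL1 (d.weaken s)
  | .andL2 d, s => .andL2 (d.weaken s)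
end

mutual
theorem RFoc.substHyp {Γ Γ' : Ctx} {A B : PProp} :
    RFoc Γ B → Γ ⊆ .susp A :: Γ' → RFoc Γ' A → RFoc Γ' B
  | .idP m, s, r => (List.mem_cons.1 (s m)).elim (fun h => by cases h; exact r) .idP
  | .downR d, s, r => .downR (d.substHyp s r)
  | .orR1 d, s, r => .orR1 (d.substHyp s r)
  | .orR2 d, s, r => .orR2 (d.substHyp s r)
  | .topR, _, _ => .topR
  | .andR d e, s, r => .andR (d.substHyp s r) (e.substHyp s r)

theorem Inv.substHyp {Γ Γ' : Ctx} {A : PProp} {Ω : List PProp} {U : Succ} :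
    Inv Γ Ω U → Γ ⊆ .susp A :: Γ' → RFoc Γ' A → Inv Γ' Ω U
  | .focR d, s, r => .focR (d.substHyp s r)
  | .focL m st d, s, r => .focL (List.mem_of_ne_of_mem (by simp) (s m)) st (d.substHyp s r)
  | .etaP d, s, r =>
      .etaP (d.substHyp (cons_subset_cons_cons s) (r.weaken (List.subset_cons_self _ _)))
  | .downL d, s, r =>
      .downL (d.substHyp (cons_subset_cons_cons s) (r.weaken (List.subset_cons_self _ _)))
  | .botL, _, _ => .botL
  | .orL d e, s, r => .orL (d.substHyp s r) (e.substHyp s r)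
  | .topPL d, s, r => .topPL (d.substHyp s r)
  | .andPL d, s, r => .andPL (d.substHyp s r)
  | .etaN d, s, r => .etaN (d.substHyp s r)
  | .upR d, s, r => .upR (d.substHyp s r)
  | .impR d, s, r => .impR (d.substHyp s r)
  | .topNR, _, _ => .topNR
  | .andNR d e, s, r => .andNR (d.substHyp s r) (e.substHyp s r)

theorem LFoc.substHyp {Γ Γ' : Ctx} {A : PProp} {B : NProp} {U : Succ} :
    LFoc Γ B U → Γ ⊆ .susp A :: Γ' → RFoc Γ' A → LFoc Γ' B U
  | .idN, _, _ => .idN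
  | .upL d, s, r => .upL (d.substHyp s r)
  | .impL d e, s, r => .impL (d.substHyp s r) (e.substHyp s r)
  | .andL1 d, s, r => .andL1 (d.substHyp s r)
  | .andL2 d, s, r => .andL2 (d.substHyp s r)
end

mutual
theorem Inv.substSucc {Γ : Ctx} {Ω : List PProp} {S : Succ} {A : NProp} {U : Succ} :
    Inv Γ Ω S → S = .susp A → LFoc Γ A U → U.stable → Inv Γ Ω U
  | .focL m _ d, hS, l, hU => .focL m hU (d.substSucc hS l hU)
  | .etaP d, hS, l, hU => .etaP (d.substSucc hS (l.weaken (List.subset_cons_self _ _)) hU)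
  | .downL d, hS, l, hU => .downL (d.substSucc hS (l.weaken (List.subset_cons_self _ _)) hU)
  | .botL, _, _, _ => .botL
  | .orL d e, hS, l, hU => .orL (d.substSucc hS l hU) (e.substSucc hS l hU)
  | .topPL d, hS, l, hU => .topPL (d.substSucc hS l hU)
  | .andPL d, hS, l, hU => .andPL (d.substSucc hS l hU)

theorem LFoc.substSucc {Γ : Ctx} {B : NProp} {S : Succ} {A : NProp} {U : Succ} :
    LFoc Γ B S → S = .susp A → LFoc Γ A U → U.stable → LFoc Γ B U
  | .idN, rfl, l, _ => l
  | .upL d, hS, l, hU => .upL (d.substSucc hS l hU)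
  | .impL d e, hS, l, hU => .impL d (e.substSucc hS l hU)
  | .andL1 d, hS, l, hU => .andL1 (d.substSucc hS l hU)
  | .andL2 d, hS, l, hU => .andL2 (d.substSucc hS l hU)
end

mutual
theorem negative_identity_expansion :
    ∀ (A : NProp) (Γ : Ctx), Inv Γ [] (.susp A) → Inv Γ [] (.neg A)
  | .atom _, _, d => .etaN d
  | .up A, Γ, d =>
      .upR (d.substSucc rfl
        (.upL (positive_identity_expansion A Γ [] _ (.focR (.idP List.mem_cons_self)))) trivial)
  | .imp A B, Γ, d =>
      .impR (positive_identity_expansion A Γ [] _ (negative_identity_expansion B _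
        ((d.weaken (List.subset_cons_self _ _)).substSucc rfl
          (.impL (.idP List.mem_cons_self) .idN) trivial)))
  | .top, _, _ => .topNR
  | .and A B, Γ, d =>
      .andNR (negative_identity_expansion A Γ (d.substSucc rfl (.andL1 .idN) trivial))
        (negative_identity_expansion B Γ (d.substSucc rfl (.andL2 .idN) trivial))

/-- Positive identity expansion. -/
theorem positive_identity_expansion :
    ∀ (A : PProp) (Γ : Ctx) (Ω : List PProp) (U : Succ),
      Inv (Hyp.susp A :: Γ) Ω U → Inv Γ (A :: Ω) U
  | .atom _, _, _, _, d => .etaP d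
  | .down B, Γ, _, _, d =>
      .downL (d.substHyp (List.cons_subset_cons _ (List.subset_cons_self _ _))
        (.downR (negative_identity_expansion B _ (.focL List.mem_cons_self trivial .idN))))
  | .bot, _, _, _, _ => .botL
  | .or A B, Γ, Ω, U, d =>
      .orL
        (positive_identity_expansion A Γ Ω U
          (d.substHyp (List.cons_subset_cons _ (List.subset_cons_self _ _))
            (.orR1 (.idP List.mem_cons_self))))
        (positive_identity_expansion B Γ Ω U
          (d.substHyp (List.cons_subset_cons _ (List.subset_cons_self _ _))
            (.orR2 (.idP List.mem_cons_self))))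
  | .top, _, _, _, d => .topPL (d.substHyp (List.Subset.refl _) .topR)
  | .and A B, Γ, Ω, U, d =>
      .andPL (positive_identity_expansion A Γ (B :: Ω) U
        (positive_identity_expansion B (.susp A :: Γ) Ω U
          (d.substHyp (List.cons_subset_cons _ (by simp))
            (.andR (.idP (by simp)) (.idP List.mem_cons_self)))))
end

end StructuralFocalization
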